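/- Let (R,<) be a totally ordered commutative ring with 1 that is dense and shrinkable, and let r ∈ R with r ≠ 1. Then the geometric series ∑_{n=0}^∞ r^n converges in R if and only if the sequence (r^n) converges to zero and 1−r is invertible in R; in that case the sum equals (1−r)^{−1}. -/

import Mathlib

/-!
Everything rests on the identity `(1 - r) * ∑_{i<n} r^i = 1 - r^n`. Consecutive partial sums
differ by `r^n`, so convergence of the series forces `r^n → 0`; multiplying the partial sums by
`1 - r` (continuous by shrinkability) and using uniqueness of limits (by density) then gives
`(1 - r) * l = 1`. Conversely, if `(1 - r) * u = 1` the partial sums equal `u * (1 - r^n)`.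
-/

open Finset

section SeqTendsto

variable {R : Type*} [CommRing R] [LinearOrder R]

def SeqTendsto (s : ℕ → R) (l : R) : Prop :=
  ∀ ε : R, 0 < ε → ∃ N : ℕ, ∀ n ≥ N, |s n - l| < ε

namespace SeqTendsto

variable {s t : ℕ → R} {a b : R}

theorem comp_succ (hs : SeqTendsto s a) : SeqTendsto (fun n => s (n + 1)) a := fun ε hε =>
  let ⟨N, hN⟩ := hs ε hε
  ⟨N, fun n hn => hN (n + 1) (by omega)⟩

theorem const_sub (c : R) (hs : SeqTendsto s a) : SeqTendsto (fun n => c - s n) (c - a) :=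
  fun ε hε =>
  let ⟨N, hN⟩ := hs ε hε
  ⟨N, fun n hn => by rw [sub_sub_sub_cancel_left, abs_sub_comm]; exact hN n hn⟩

variable [IsStrictOrderedRing R]

theorem sub (hdense : ∀ α : R, 0 < α → ∃ β γ : R, 0 < β ∧ 0 < γ ∧ β + γ < α)
    (hs : SeqTendsto s a) (ht : SeqTendsto t b) :
    SeqTendsto (fun n => s n - t n) (a - b) := by
  intro ε hε
  obtain ⟨β, γ, hβ, hγ, hβγ⟩ := hdense ε hε
  obtain ⟨N₁, hN₁⟩ := hs β hβ
  obtain ⟨N₂, hN₂⟩ := ht γ hγ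
  refine ⟨max N₁ N₂, fun n hn => ?_⟩
  calc |s n - t n - (a - b)| = |(s n - a) - (t n - b)| := by ring_nf
    _ ≤ |s n - a| + |t n - b| := abs_sub _ _
    _ < ε := by linarith [hN₁ n (le_of_max_le_left hn), hN₂ n (le_of_max_le_right hn)]

theorem const_mul (hshrink : ∀ α M : R, 0 < α → 0 < M → ∃ δ : R, 0 < δ ∧ M * δ < α)
    (c : R) (hs : SeqTendsto s a) : SeqTendsto (fun n => c * s n) (c * a) := by
  intro ε hε
  rcases eq_or_ne c 0 with rfl | hc
  · exact ⟨0, fun n _ => by simpa using hε⟩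
  obtain ⟨δ, hδ, hcδ⟩ := hshrink ε |c| hε (abs_pos.mpr hc)
  obtain ⟨N, hN⟩ := hs δ hδ
  refine ⟨N, fun n hn => ?_⟩
  calc |c * s n - c * a| = |c| * |s n - a| := by rw [← mul_sub, abs_mul]
    _ ≤ |c| * δ := mul_le_mul_of_nonneg_left (hN n hn).le (abs_nonneg c)
    _ < ε := hcδ

theorem unique (hdense : ∀ α : R, 0 < α → ∃ β γ : R, 0 < β ∧ 0 < γ ∧ β + γ < α)
    (ha : SeqTendsto s a) (hb : SeqTendsto s b) : a = b := by
  by_contra hab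
  obtain ⟨β, γ, hβ, hγ, hβγ⟩ := hdense |a - b| (abs_pos.mpr (sub_ne_zero.mpr hab))
  obtain ⟨N₁, hN₁⟩ := ha β hβ
  obtain ⟨N₂, hN₂⟩ := hb γ hγ
  have hsa := hN₁ (max N₁ N₂) (le_max_left _ _)
  have hsb := hN₂ (max N₁ N₂) (le_max_right _ _)
  have : |a - b| ≤ |s (max N₁ N₂) - a| + |s (max N₁ N₂) - b| := by
    rw [abs_sub_comm (s _) a]; exact abs_sub_le a _ b
  linarith

end SeqTendsto

end SeqTendsto

section GeomSeries

variable {R : Type*} [CommRing R] [LinearOrder R] [IsStrictOrderedRing R] {r : R}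

theorem seqTendsto_pow_zero_of_seqTendsto_geom_sum
    (hdense : ∀ α : R, 0 < α → ∃ β γ : R, 0 < β ∧ 0 < γ ∧ β + γ < α) {l : R}
    (hl : SeqTendsto (fun n => ∑ i ∈ range n, r ^ i) l) : SeqTendsto (fun n => r ^ n) 0 := by
  have h := hl.comp_succ.sub hdense hl
  simp only [sum_range_succ, add_sub_cancel_left, sub_self] at h
  exact h

theorem one_sub_mul_eq_one_of_seqTendsto_geom_sum
    (hdense : ∀ α : R, 0 < α → ∃ β γ : R, 0 < β ∧ 0 < γ ∧ β + γ < α)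
    (hshrink : ∀ α M : R, 0 < α → 0 < M → ∃ δ : R, 0 < δ ∧ M * δ < α) {l : R}
    (hl : SeqTendsto (fun n => ∑ i ∈ range n, r ^ i) l) : (1 - r) * l = 1 := by
  have hmul := hl.const_mul hshrink (1 - r)
  simp only [mul_neg_geom_sum] at hmul
  have hone := (seqTendsto_pow_zero_of_seqTendsto_geom_sum hdense hl).const_sub 1
  rw [sub_zero] at hone
  exact hmul.unique hdense hone

theorem seqTendsto_geom_sum_of_one_sub_mul_eq_one
    (hshrink : ∀ α M : R, 0 < α → 0 < M → ∃ δ : R, 0 < δ ∧ M * δ < α) {u : R}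
    (hu : (1 - r) * u = 1) (hpow : SeqTendsto (fun n => r ^ n) 0) :
    SeqTendsto (fun n => ∑ i ∈ range n, r ^ i) u := by
  have hsum : ∀ n, ∑ i ∈ range n, r ^ i = u * (1 - r ^ n) := fun n => by
    rw [← mul_neg_geom_sum, ← mul_assoc, mul_comm u, hu, one_mul]
  have h := (hpow.const_sub 1).const_mul hshrink u
  simp only [sub_zero, mul_one, ← hsum] at h
  exact h

end GeomSeries

theorem geometric_series_convergent_iff_general
    {R : Type*} [CommRing R] [LinearOrder R] [IsStrictOrderedRing R]
    (hdense : ∀ α : R, 0 < α → ∃ β γ : R, 0 < β ∧ 0 < γ ∧ β + γ < α)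
    (hshrink : ∀ α M : R, 0 < α → 0 < M →
      ∃ αl αr : R, 0 < αl ∧ 0 < αr ∧ M * αr < α ∧ αl * M < α)
    (r : R) :
    ((∃ l : R, ∀ ε : R, 0 < ε → ∃ N : ℕ, ∀ n ≥ N,
        |(∑ i ∈ Finset.range n, r ^ i) - l| < ε) ↔
      ((∀ ε : R, 0 < ε → ∃ N : ℕ, ∀ n ≥ N, |r ^ n - 0| < ε) ∧ IsUnit (1 - r))) ∧
    (∀ u : R, (1 - r) * u = 1 →
      ((∀ ε : R, 0 < ε → ∃ N : ℕ, ∀ n ≥ N, |r ^ n - 0| < ε) →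
        ∀ ε : R, 0 < ε → ∃ N : ℕ, ∀ n ≥ N,
          |(∑ i ∈ Finset.range n, r ^ i) - u| < ε)) := by
  have hshrink' : ∀ α M : R, 0 < α → 0 < M → ∃ δ : R, 0 < δ ∧ M * δ < α :=
    fun α M hα hM =>
    let ⟨_, δ, _, hδ, hMδ, _⟩ := hshrink α M hα hM
    ⟨δ, hδ, hMδ⟩
  have hsum : ∀ u : R, (1 - r) * u = 1 → SeqTendsto (fun n => r ^ n) 0 →
      SeqTendsto (fun n => ∑ i ∈ range n, r ^ i) u :=
    fun _ => seqTendsto_geom_sum_of_one_sub_mul_eq_one hshrink'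
  refine ⟨⟨fun ⟨l, hl⟩ => ⟨?_, ?_⟩, fun ⟨hpow, hunit⟩ => ?_⟩, hsum⟩
  · exact seqTendsto_pow_zero_of_seqTendsto_geom_sum hdense hl
  · exact .of_mul_eq_one l (one_sub_mul_eq_one_of_seqTendsto_geom_sum hdense hshrink' hl)
  · obtain ⟨u, hu⟩ := hunit.exists_right_inv
    exact ⟨u, hsum u hu hpow⟩

/-- In a dense, shrinkable totally ordered commutative ring with 1 and `r ≠ 1`,
the geometric series `∑ r^n` converges iff `(r^n)` converges to `0` and `1 - r`
is invertible; in that case the sum is the inverse of `1 - r`. -/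
theorem geometric_series_convergent_iff
    {R : Type*} [CommRing R] [LinearOrder R] [IsStrictOrderedRing R]
    (hdense : ∀ α : R, 0 < α → ∃ β γ : R, 0 < β ∧ 0 < γ ∧ β + γ < α)
    (hshrink : ∀ α M : R, 0 < α → 0 < M →
      ∃ αl αr : R, 0 < αl ∧ 0 < αr ∧ M * αr < α ∧ αl * M < α)
    (r : R) (hr : r ≠ 1) :
    ((∃ l : R, ∀ ε : R, 0 < ε → ∃ N : ℕ, ∀ n ≥ N,
        |(∑ i ∈ Finset.range n, r ^ i) - l| < ε) ↔
      ((∀ ε : R, 0 < ε → ∃ N : ℕ, ∀ n ≥ N, |r ^ n - 0| < ε) ∧ IsUnit (1 - r))) ∧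
    (∀ u : R, (1 - r) * u = 1 →
      ((∀ ε : R, 0 < ε → ∃ N : ℕ, ∀ n ≥ N, |r ^ n - 0| < ε) →
        ∀ ε : R, 0 < ε → ∃ N : ℕ, ∀ n ≥ N,
          |(∑ i ∈ Finset.range n, r ^ i) - u| < ε)) :=
  geometric_series_convergent_iff_general hdense hshrink r
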